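/- arXiv:1609.02967 — 2 statements merged into one kernel-verified Lean document; each statement's English description precedes it below -/
import Mathlib

section
/- For every prime power q, every n ≥ 1, and every squarefree monic polynomial f ∈ F_q[T] of degree n, Λ(f) = Σ_{r=1}^{n} (−1)^{n−r} · X^{(r,1^{n−r})}(τ_f), where (r,1^{n−r}) denotes the hook partition of n with one part equal to r and n−r parts equal to 1. -/
open Polynomial UniqueFactorizationMonoid
open scoped Classical

noncomputable section
namespace PaperFF

/-! ### Partitions and irreducible characters of the symmetric group -/

/-- The `i`-th largest entry (0-indexed) of a multiset of naturals; `0` if out of range. -/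
def partAtM (s : Multiset ℕ) (i : ℕ) : ℕ := ((s.sort (· ≤ ·)).reverse).getD i 0

/-- The largest part `λ₁` of a partition (0 for the empty partition). -/
def maxPart {n : ℕ} (lam : Nat.Partition n) : ℕ := partAtM lam.parts 0

/-- Power sum symmetric polynomial `p_k` in `n` variables. -/
def psumP (n k : ℕ) : MvPolynomial (Fin n) ℤ := ∑ i, MvPolynomial.X i ^ k

/-- `p_ν = ∏ p_{ν_i}` for a multiset `ν` of naturals. -/
def pMult (n : ℕ) (ν : Multiset ℕ) : MvPolynomial (Fin n) ℤ := (ν.map (psumP n)).prod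

/-- Vandermonde product `a_δ = ∏_{i<j} (x_i - x_j)` in `n` variables. -/
def vand (n : ℕ) : MvPolynomial (Fin n) ℤ :=
  ∏ i : Fin n, ∏ j ∈ Finset.Ioi i, (MvPolynomial.X i - MvPolynomial.X j)

/-- The exponent vector `λ + δ` with `δ = (n-1, n-2, …, 0)`. -/
def expOfM (n : ℕ) (s : Multiset ℕ) : Fin n →₀ ℕ :=
  Finsupp.equivFunOnFinite.symm fun i => partAtM s i + (n - 1 - (i : ℕ))

/-- The irreducible character `X^λ(ν)` of the symmetric group `S_n`, where `λ` (resp. `ν`)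
is given by its multiset of parts.  It is defined through the classical formula of Frobenius:
`p_ν · a_δ = ∑_λ X^λ(ν) · x^{λ+δ} + (monomials not of the form μ+δ)`, i.e. `X^λ(ν)` is the
coefficient of the monomial `x^{λ+δ}` in `p_ν · a_δ`. -/
def XcharMM (n : ℕ) (lam ν : Multiset ℕ) : ℤ :=
  MvPolynomial.coeff (expOfM n lam) (pMult n ν * vand n)

/-- The irreducible character `X^λ(ν)` of `S_n`, with `ν` a multiset (cycle type). -/
def Xchar {n : ℕ} (lam : Nat.Partition n) (ν : Multiset ℕ) : ℤ := XcharMM n lam.parts ν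

/-- The partition `(1^n)` of `n`. -/
def onesPart (n : ℕ) : Nat.Partition n :=
  ⟨Multiset.replicate n 1,
    fun {i} hi => by rw [Multiset.eq_of_mem_replicate hi]; exact one_pos,
    by simp [Multiset.sum_replicate]⟩

/-- The hook partition `(r, 1^{n-r})` of `n` (defined when `1 ≤ r ≤ n`). -/
def hookPart (n r : ℕ) : Nat.Partition n :=
  if h : 1 ≤ r ∧ r ≤ n then
    ⟨r ::ₘ Multiset.replicate (n - r) 1,
      fun {i} hi => by
        rcases Multiset.mem_cons.mp hi with rfl | hi
        · exact h.1
        · rw [Multiset.eq_of_mem_replicate hi]; exact one_pos,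
      by simp [Multiset.sum_cons, Multiset.sum_replicate]; omega⟩
  else onesPart n

/-- The partition `(λ₁, λ₂, 1^ν)` of `n`, with `ν = n - λ₁ - λ₂`
(defined when `1 ≤ λ₂ ≤ λ₁` and `λ₁ + λ₂ ≤ n`). -/
def twoRowPart (n l1 l2 : ℕ) : Nat.Partition n :=
  if h : 1 ≤ l2 ∧ l2 ≤ l1 ∧ l1 + l2 ≤ n then
    ⟨l1 ::ₘ l2 ::ₘ Multiset.replicate (n - l1 - l2) 1,
      fun {i} hi => by
        rcases Multiset.mem_cons.mp hi with rfl | hi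
        · omega
        rcases Multiset.mem_cons.mp hi with rfl | hi
        · exact h.1
        · rw [Multiset.eq_of_mem_replicate hi]; exact one_pos,
      by simp [Multiset.sum_cons, Multiset.sum_replicate]; omega⟩
  else onesPart n

/-- The partition `(ν+2, 2^j, 1^i)` of `n`, with `ν = n - i - 2j - 2`
(defined when `i + 2j + 2 ≤ n`). -/
def nearColPart (n i j : ℕ) : Nat.Partition n :=
  if h : i + 2 * j + 2 ≤ n then
    ⟨(n - i - 2 * j) ::ₘ (Multiset.replicate j 2 + Multiset.replicate i 1),
      fun {x} hx => by
        rcases Multiset.mem_cons.mp hx with rfl | hx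
        · omega
        rcases Multiset.mem_add.mp hx with hx | hx
        · rw [Multiset.eq_of_mem_replicate hx]; exact two_pos
        · rw [Multiset.eq_of_mem_replicate hx]; exact one_pos,
      by simp [Multiset.sum_cons, Multiset.sum_replicate]; omega⟩
  else onesPart n

/-- The conjugate (transposed) partition, as a multiset of parts:
`λ'_i = #{j : λ_j ≥ i}`. -/
def conjParts (s : Multiset ℕ) : Multiset ℕ :=
  ((Finset.Icc 1 s.sum).val.map fun i => Multiset.card (s.filter fun p => i ≤ p)).filter
    (fun c => 0 < c)

/-- Cauchy's measure `𝐩(ν) = ∏_i 1/(i^{m_i} m_i!)`, the probability that a uniformly random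
permutation in `S_n` has cycle type `ν`. -/
def cycP {n : ℕ} (ν : Nat.Partition n) : ℝ :=
  ∏ i ∈ Finset.range n,
    (((i + 1 : ℕ) : ℝ) ^ (ν.parts.count (i + 1)) *
      (Nat.factorial (ν.parts.count (i + 1)) : ℝ))⁻¹

/-- The harmonic number `H_n = 1 + 1/2 + ⋯ + 1/n`. -/
def Hn (n : ℕ) : ℝ := ∑ k ∈ Finset.range n, ((k : ℝ) + 1)⁻¹

/-! ### Arithmetic in 𝔽_q[T] -/

variable (F : Type) [Field F] [Fintype F]

/-- The set of monic polynomials of degree `n`. -/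
def Mn (n : ℕ) : Set (Polynomial F) := {f | f.Monic ∧ f.natDegree = n}

/-- The short interval `I(f;h) = {g monic : deg(f-g) ≤ h}`. -/
def SI (h : ℕ) (f : Polynomial F) : Set (Polynomial F) :=
  {g | g.Monic ∧ (f - g).degree ≤ (h : ℕ)}

/-- The mean value of `η` over `M_n`. -/
def meanM (n : ℕ) (η : Polynomial F → ℂ) : ℂ :=
  ((Fintype.card F : ℂ) ^ n)⁻¹ * ∑ᶠ f ∈ Mn F n, η f

/-- The variance of `η` over `M_n`. -/
def varM (n : ℕ) (η : Polynomial F → ℂ) : ℝ :=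
  ((Fintype.card F : ℝ) ^ n)⁻¹ * ∑ᶠ f ∈ Mn F n, ‖η f - meanM F n η‖ ^ 2

/-- The covariance of `η₁, η₂` over `M_n`. -/
def covM (n : ℕ) (η₁ η₂ : Polynomial F → ℂ) : ℂ :=
  ((Fintype.card F : ℂ) ^ n)⁻¹ *
    ∑ᶠ f ∈ Mn F n, (η₁ f - meanM F n η₁) * (starRingEnd ℂ) (η₂ f - meanM F n η₂)

/-- The extended factorization type of `f`: the multiset of pairs
`(deg P, e)` over the distinct monic irreducible factors `P` of `f`, with multiplicities `e`. -/
def extType (f : Polynomial F) : Multiset (ℕ × ℕ) :=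
  (normalizedFactors f).dedup.map fun P => (P.natDegree, (normalizedFactors f).count P)

/-- The factorization type `τ_f` of `f`: the multiset of degrees of its monic irreducible
factors (with multiplicity). -/
def factType (f : Polynomial F) : Multiset ℕ := (normalizedFactors f).map natDegree

/-- `X^λ(f)` for a multiset `λ`: equals `X^λ(τ_f)` for squarefree monic `f` of degree `n`,
and `0` otherwise. -/
def XcharPolyM (n : ℕ) (lamParts : Multiset ℕ) (f : Polynomial F) : ℂ :=
  if f.Monic ∧ f.natDegree = n ∧ Squarefree f then (XcharMM n lamParts (factType F f) : ℂ)
  else 0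

/-- `X^λ(f)`: equals `X^λ(τ_f)` for squarefree monic `f` of degree `n`, and `0` otherwise. -/
def XcharPoly {n : ℕ} (lam : Nat.Partition n) (f : Polynomial F) : ℂ :=
  XcharPolyM F n lam.parts f

/-- The Möbius function of a monic polynomial. -/
def muP (f : Polynomial F) : ℂ :=
  if Squarefree f then (-1 : ℂ) ^ Multiset.card (normalizedFactors f) else 0

/-- The number of distinct monic irreducible divisors of `f`. -/
def omegaP (f : Polynomial F) : ℕ := Multiset.card (normalizedFactors f).dedup

/-- The von Mangoldt function: `Λ(f) = deg P` if `f = P^e` is a prime power, else `0`. -/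
def vonM (f : Polynomial F) : ℂ :=
  if Multiset.card (normalizedFactors f).dedup = 1 then
    (((normalizedFactors f).dedup.map natDegree).sum : ℂ)
  else 0

/-- The `k`-fold divisor function `d_k(f)`. -/
def dk (k : ℕ) (f : Polynomial F) : ℕ :=
  Nat.card {v : Fin k → Polynomial F // (∀ i, (v i).Monic) ∧ ∏ i, v i = f}

/-! ### Factorization functions -/

/-- The total degree `Σ mᵢ eᵢ` of an extended factorization type. -/
def totalDeg (t : Multiset (ℕ × ℕ)) : ℕ := (t.map fun p => p.1 * p.2).sum

/-- The extended factorization type of a squarefree polynomial of factorization type `ν`. -/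
def sfType {n : ℕ} (ν : Nat.Partition n) : Multiset (ℕ × ℕ) := ν.parts.map fun d => (d, 1)

/-- The expansion ("Fourier") coefficient `â_λ = Σ_{ν⊢n} 𝐩(ν) a_ν X^λ(ν)` of a factorization
function. -/
def fhat (n : ℕ) (a : Multiset (ℕ × ℕ) → ℂ) (lam : Nat.Partition n) : ℂ :=
  ∑ ν : Nat.Partition n, (cycP ν : ℂ) * a (sfType ν) * (Xchar lam ν.parts : ℂ)

/-! ### Dirichlet characters mod T^M -/

/-- The ring `𝔽_q[T]/(T^M)`. -/
abbrev Rq (M : ℕ) := Polynomial F ⧸ Ideal.span {(Polynomial.X : Polynomial F) ^ M}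

/-- Reduction mod `T^M`. -/
def toRq (M : ℕ) : Polynomial F →+* Rq F M := Ideal.Quotient.mk _

/-- A character mod `T^M` is even if `χ(cf) = χ(f)` for all nonzero scalars `c`. -/
def IsEvenChar {M : ℕ} (χ : MulChar (Rq F M) ℂ) : Prop :=
  ∀ c : F, c ≠ 0 → ∀ x : Rq F M, χ (toRq F M (Polynomial.C c) * x) = χ x

/-- A character mod `T^M` is primitive if it is not induced by a character of smaller
modulus `T^{M'}`, i.e. if its values on polynomials coprime to `T` do not depend only on the
residue mod `T^{M'}` for some `M' < M`. -/
def IsPrimChar {M : ℕ} (χ : MulChar (Rq F M) ℂ) : Prop :=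
  ¬ ∃ M' < M, ∀ f g : Polynomial F, ¬ Polynomial.X ∣ f → ¬ Polynomial.X ∣ g →
      Polynomial.X ^ M' ∣ (f - g) → χ (toRq F M f) = χ (toRq F M g)

/-! ### Schur polynomials -/

/-- The complete homogeneous symmetric polynomial `h_m` in `k` variables. -/
def hPoly (k m : ℕ) : MvPolynomial (Fin k) ℤ :=
  ∑ᶠ d : Fin k → ℕ, if (∑ i, d i) = m then ∏ i, MvPolynomial.X i ^ d i else 0

/-- `h_m` for integer index, `0` for negative `m`. -/
def hPolyZ (k : ℕ) (m : ℤ) : MvPolynomial (Fin k) ℤ :=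
  if 0 ≤ m then hPoly k m.toNat else 0

/-- The Schur polynomial `s_λ` in `k` variables, via the Jacobi–Trudi determinant
`s_λ = det(h_{λ_i - i + j})_{i,j}`; it is `0` when `ℓ(λ) > k`. -/
def schurP (k : ℕ) {n : ℕ} (lam : Nat.Partition n) : MvPolynomial (Fin k) ℤ :=
  if Multiset.card lam.parts ≤ k then
    Matrix.det (Matrix.of fun i j : Fin k =>
      hPolyZ k ((partAtM lam.parts i : ℤ) - (i : ℕ) + (j : ℕ)))
  else 0

/-- `s_λ(1,…,1)`, the Schur polynomial in `k` variables evaluated with all variables `1`. -/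
def schurAtOnes (k : ℕ) {n : ℕ} (lam : Nat.Partition n) : ℤ :=
  MvPolynomial.eval (fun _ => (1 : ℤ)) (schurP k lam)

/-- `s_λ(Θ)` for `Θ = diag(e^{2πiθ_1},…,e^{2πiθ_N})`. -/
def schurEval {N n : ℕ} (lam : Nat.Partition n) (θ : Fin N → ℝ) : ℂ :=
  MvPolynomial.aeval (fun j => Complex.exp (2 * Real.pi * Complex.I * (θ j))) (schurP N lam)

/-! ### Dirichlet convolution and the basis functions ι -/

/-- Dirichlet convolution on monic polynomials. -/
def conv (φ₁ φ₂ : Polynomial F → ℂ) (f : Polynomial F) : ℂ :=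
  ∑ᶠ p : Polynomial F × Polynomial F,
    if p.1.Monic ∧ p.2.Monic ∧ p.1 * p.2 = f then φ₁ p.1 * φ₂ p.2 else 0

/-- `ι_{m,e}`: the indicator of `e`-th powers of monic irreducibles of degree `m`. -/
def iota (m e : ℕ) (f : Polynomial F) : ℂ :=
  if ∃ P : Polynomial F, Irreducible P ∧ P.Monic ∧ P.natDegree = m ∧ f = P ^ e then 1 else 0

/-- `ι_{(𝐦,𝐞)} = ι_{m_1,e_1} ⋆ ⋯ ⋆ ι_{m_ℓ,e_ℓ}` for an array given as a list of pairs. -/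
def iotaL (F : Type) [Field F] [Fintype F] : List (ℕ × ℕ) → Polynomial F → ℂ
  | [] => fun f => if f = 1 then 1 else 0
  | me :: rest => conv F (iota F me.1 me.2) (iotaL F rest)

/-! ### Restriction to polynomials coprime to T -/

/-- Monic polynomials of degree `n` with nonzero constant coefficient. -/
def Mnat (n : ℕ) : Set (Polynomial F) := {f | f.Monic ∧ f.natDegree = n ∧ f.coeff 0 ≠ 0}

/-- The mean `E^♮(a;n)` over `M_n^♮`. -/
def Enat (n : ℕ) (η : Polynomial F → ℂ) : ℂ :=
  ((Nat.card (Mnat F n) : ℂ))⁻¹ * ∑ᶠ f ∈ Mnat F n, η f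

/-! ### Auxiliary development for `statement8` -/

section Statement8Aux

open MvPolynomial Equiv Finsupp

/-- A function `Fin n → ℕ` as a finsupp. -/
private def fvec (n : ℕ) (g : Fin n → ℕ) : Fin n →₀ ℕ := Finsupp.equivFunOnFinite.symm g

@[simp] private lemma fvec_apply (n : ℕ) (g : Fin n → ℕ) (k : Fin n) : fvec n g k = g k := rfl

private lemma fvec_inj {n : ℕ} {g h : Fin n → ℕ} (H : fvec n g = fvec n h) : g = h := by
  funext k; exact DFunLike.congr_fun H k

/-- The exponent vector `δ + n·e_j`. -/
private def Bv (n : ℕ) (j : Fin n) : Fin n →₀ ℕ :=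
  fvec n fun i => (n - 1 - i) + if i = j then n else 0

/-- The exponent vector `δ + (n-m)·e_i`. -/
private def Av (n m : ℕ) (i : Fin n) : Fin n →₀ ℕ :=
  fvec n fun k => (n - 1 - k) + if k = i then n - m else 0

/-- The staircase exponent vector `δ`. -/
private def dvec (n : ℕ) : Fin n →₀ ℕ := fvec n fun i => n - 1 - i

private lemma prod_X_pow_eq {α : Type*} (s : Finset α) (h : α → ℕ) :
    ∏ x ∈ s, (X x : MvPolynomial α ℤ) ^ h x
      = monomial (∑ x ∈ s, Finsupp.single x (h x)) 1 := by
  classical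
  induction s using Finset.induction_on with
  | empty => simp
  | insert a s hx ih =>
      rw [Finset.prod_insert hx, ih, Finset.sum_insert hx, MvPolynomial.X_pow_eq_monomial, MvPolynomial.monomial_mul,
        one_mul]

private lemma sum_single_eq_fvec (n : ℕ) (g : Fin n → ℕ) :
    ∑ x : Fin n, Finsupp.single x (g x) = fvec n g := by
  ext k
  rw [Finsupp.finset_sum_apply]
  simp only [Finsupp.single_apply]
  rw [Finset.sum_ite_eq' Finset.univ k g]
  simp

/-- The Vandermonde determinant on reversed variables. -/
private noncomputable def VD (n : ℕ) : MvPolynomial (Fin n) ℤ :=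
  (Matrix.vandermonde fun i : Fin n => (X i.rev : MvPolynomial (Fin n) ℤ)).det

private lemma vand_eq_VD (n : ℕ) : vand n = VD n := by
  rw [VD, Matrix.det_vandermonde, vand]
  have h1 : (∏ i : Fin n, ∏ j ∈ Finset.Ioi i,
        ((X j.rev : MvPolynomial (Fin n) ℤ) - X i.rev))
      = ∏ j : Fin n, ∏ i ∈ Finset.Iio j, ((X j.rev : MvPolynomial (Fin n) ℤ) - X i.rev) :=
    Finset.prod_comm' (by simp)
  have h2 : (∏ j : Fin n, ∏ i ∈ Finset.Iio j, ((X j.rev : MvPolynomial (Fin n) ℤ) - X i.rev))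
      = ∏ j : Fin n, ∏ i ∈ Finset.Iio j.rev, ((X j : MvPolynomial (Fin n) ℤ) - X i.rev) := by
    rw [← Equiv.prod_comp Fin.revPerm
      (fun j => ∏ i ∈ Finset.Iio j, ((X j.rev : MvPolynomial (Fin n) ℤ) - X i.rev))]
    simp [Fin.rev_rev]
  have h3 : ∀ j : Fin n,
      (∏ i ∈ Finset.Iio j.rev, ((X j : MvPolynomial (Fin n) ℤ) - X i.rev))
      = ∏ b ∈ Finset.Ioi j, ((X j : MvPolynomial (Fin n) ℤ) - X b) := by
    intro j
    refine Finset.prod_bij' (fun i _ => i.rev) (fun b _ => b.rev) ?_ ?_ ?_ ?_ ?_ <;>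
      intro a ha
    all_goals
      first
        | (simp only [Finset.mem_Iio, Finset.mem_Ioi, Fin.lt_def, Fin.val_rev] at ha ⊢;
           have h1 := a.isLt; have h2 := j.isLt; omega)
        | simp [Fin.rev_rev]
  rw [h1, h2]
  exact (Finset.prod_congr rfl fun j _ => (h3 j)).symm

/-- Antisymmetry of a polynomial under permutations of variables. -/
private def IsAntisym (n : ℕ) (H : MvPolynomial (Fin n) ℤ) : Prop :=
  ∀ τ : Perm (Fin n), rename (⇑τ) H = MvPolynomial.C ((Perm.sign τ : ℤ)) * H

private lemma rename_vand (n : ℕ) (τ : Perm (Fin n)) :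
    rename (⇑τ) (vand n) = MvPolynomial.C ((Perm.sign τ : ℤ)) * vand n := by
  rw [vand_eq_VD, VD]
  rw [AlgHom.map_det (MvPolynomial.rename (⇑τ))]
  have hM : (MvPolynomial.rename (⇑τ)).mapMatrix
        (Matrix.vandermonde fun i : Fin n => (X i.rev : MvPolynomial (Fin n) ℤ))
      = (Matrix.vandermonde fun i : Fin n => (X i.rev : MvPolynomial (Fin n) ℤ)).submatrix
        (⇑(Fin.revPerm.trans (τ.trans Fin.revPerm))) id := by
    ext i j
    simp [Matrix.vandermonde, AlgHom.mapMatrix_apply, Matrix.map_apply, Fin.rev_rev]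
  rw [hM, Matrix.det_permute]
  have hsign : Perm.sign (Fin.revPerm.trans (τ.trans Fin.revPerm)) = Perm.sign τ := by
    have : Fin.revPerm.trans (τ.trans Fin.revPerm) = Fin.revPerm * τ * Fin.revPerm := rfl
    rw [this, map_mul, map_mul]
    have h2 := Int.units_mul_self (Perm.sign (Fin.revPerm (n := n)))
    calc Perm.sign Fin.revPerm * Perm.sign τ * Perm.sign Fin.revPerm
        = Perm.sign τ * (Perm.sign Fin.revPerm * Perm.sign Fin.revPerm) := by
          rw [mul_comm (Perm.sign (Fin.revPerm (n := n))) (Perm.sign τ), mul_assoc]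
      _ = Perm.sign τ := by rw [h2, mul_one]
  rw [hsign]
  rw [← VD, ← vand_eq_VD]
  congr 1

private lemma rename_psum (n k : ℕ) (τ : Perm (Fin n)) :
    rename (⇑τ) (psumP n k) = psumP n k := by
  unfold psumP
  rw [map_sum]
  simp only [map_pow, rename_X]
  exact Equiv.sum_comp τ (fun i => (X i : MvPolynomial (Fin n) ℤ) ^ k)

private lemma rename_pMult (n : ℕ) (ν : Multiset ℕ) (τ : Perm (Fin n)) :
    rename (⇑τ) (pMult n ν) = pMult n ν := by
  unfold pMult
  rw [map_multiset_prod, Multiset.map_map]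
  congr 1
  apply Multiset.map_congr rfl
  intro k _
  exact rename_psum n k τ

private lemma isAntisym_pMult_vand (n : ℕ) (ν : Multiset ℕ) :
    IsAntisym n (pMult n ν * vand n) := by
  intro τ
  rw [map_mul, rename_pMult, rename_vand, mul_left_comm]

private lemma coeff_mapDomain_antisym {n : ℕ} {H : MvPolynomial (Fin n) ℤ}
    (hH : IsAntisym n H) (τ : Perm (Fin n)) (d : Fin n →₀ ℕ) :
    coeff (Finsupp.mapDomain (⇑τ) d) H = (Perm.sign τ : ℤ) * coeff d H := by
  have h := coeff_rename_mapDomain (⇑τ) τ.injective H d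
  rw [hH τ, MvPolynomial.coeff_C_mul] at h
  have hs : (Perm.sign τ : ℤ) * (Perm.sign τ : ℤ) = 1 := by
    rw [← Units.val_mul, Int.units_mul_self, Units.val_one]
  calc coeff (Finsupp.mapDomain (⇑τ) d) H
      = ((Perm.sign τ : ℤ) * (Perm.sign τ : ℤ)) * coeff (Finsupp.mapDomain (⇑τ) d) H := by
        rw [hs, one_mul]
    _ = (Perm.sign τ : ℤ) * coeff d H := by rw [mul_assoc, h]

private lemma coeff_eq_zero_rep {n : ℕ} {H : MvPolynomial (Fin n) ℤ} (hH : IsAntisym n H)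
    (d : Fin n →₀ ℕ) {p q : Fin n} (hpq : p ≠ q) (h : d p = d q) : coeff d H = 0 := by
  have hd : Finsupp.mapDomain (⇑(Equiv.swap p q)) d = d := by
    ext k
    rw [Finsupp.mapDomain_equiv_apply, Equiv.symm_swap]
    rcases eq_or_ne k p with rfl | hkp
    · rw [Equiv.swap_apply_left]; exact h.symm
    rcases eq_or_ne k q with rfl | hkq
    · rw [Equiv.swap_apply_right]; exact h
    · rw [Equiv.swap_apply_of_ne_of_ne hkp hkq]
  have h2 := coeff_mapDomain_antisym hH (Equiv.swap p q) d
  rw [hd, Equiv.Perm.sign_swap hpq] at h2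
  simp only [Units.val_neg, Units.val_one, neg_mul, one_mul] at h2
  omega

private lemma coeff_dvec_vand (n : ℕ) : coeff (dvec n) (vand n) = 1 := by
  classical
  rw [vand_eq_VD, VD, Matrix.det_apply, MvPolynomial.coeff_sum]
  have hterm : ∀ σ : Perm (Fin n),
      (∏ i : Fin n,
          Matrix.vandermonde (fun i : Fin n => (X i.rev : MvPolynomial (Fin n) ℤ)) (σ i) i)
        = monomial (fvec n fun k => (((σ.trans Fin.revPerm).symm k : Fin n) : ℕ)) 1 := by
    intro σ
    set e : Fin n ≃ Fin n := σ.trans Fin.revPerm with he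
    have step : ∀ i : Fin n,
        Matrix.vandermonde (fun i : Fin n => (X i.rev : MvPolynomial (Fin n) ℤ)) (σ i) i
          = (fun x => (X x : MvPolynomial (Fin n) ℤ) ^ ((e.symm x : Fin n) : ℕ)) (e i) := by
      intro i
      show (X (σ i).rev : MvPolynomial (Fin n) ℤ) ^ (i : ℕ)
          = (X (e i) : MvPolynomial (Fin n) ℤ) ^ ((e.symm (e i) : Fin n) : ℕ)
      rw [Equiv.symm_apply_apply]
      rfl
    rw [Finset.prod_congr rfl fun i _ => step i]
    rw [Equiv.prod_comp e (fun x => (X x : MvPolynomial (Fin n) ℤ) ^ ((e.symm x : Fin n) : ℕ))]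
    rw [prod_X_pow_eq, sum_single_eq_fvec]
  have key1 : ∀ σ : Perm (Fin n),
      (fvec n fun k => (((σ.trans Fin.revPerm).symm k : Fin n) : ℕ)) = dvec n ↔ σ = 1 := by
    intro σ
    constructor
    · intro hσ
      have hfun := fvec_inj hσ
      ext x : 1
      have h1 := congrFun hfun x.rev
      simp only [Equiv.symm_trans_apply, Fin.revPerm_symm, Fin.revPerm_apply, Fin.rev_rev] at h1
      have hx : n - 1 - ((x.rev : Fin n) : ℕ) = (x : ℕ) := by
        rw [Fin.val_rev]; omega
      rw [hx] at h1
      have h2 : σ.symm x = x := Fin.val_injective h1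
      calc σ x = σ (σ.symm x) := by rw [h2]
        _ = x := σ.apply_symm_apply x
    · rintro rfl
      ext k
      simp only [fvec_apply, dvec, Equiv.symm_trans_apply, Fin.revPerm_symm, Fin.revPerm_apply,
        Fin.val_rev]
      have : ((1 : Perm (Fin n)).symm k.rev) = k.rev := rfl
      rw [this, Fin.val_rev]
      omega
  have hterm2 : ∀ σ : Perm (Fin n),
      coeff (dvec n) (Perm.sign σ •
          ∏ i : Fin n,
            Matrix.vandermonde (fun i : Fin n => (X i.rev : MvPolynomial (Fin n) ℤ)) (σ i) i)
        = if σ = 1 then 1 else 0 := by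
    intro σ
    rw [hterm, Units.smul_def, MvPolynomial.coeff_smul, smul_eq_mul, MvPolynomial.coeff_monomial]
    by_cases h : σ = 1
    · rw [if_pos ((key1 σ).mpr h), if_pos h, h]
      simp
    · rw [if_neg (fun hc => h ((key1 σ).mp hc)), if_neg h, mul_zero]
  rw [Finset.sum_congr rfl fun σ _ => hterm2 σ, Finset.sum_ite_eq' Finset.univ (1 : Perm (Fin n))]
  simp

private lemma key_zero (n m : ℕ) (hm1 : 1 ≤ m) (hmn : m < n) (H : MvPolynomial (Fin n) ℤ)
    (hH : IsAntisym n H) :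
    ∑ j : Fin n, coeff (Bv n j) (psumP n m * H) = 0 := by
  unfold psumP
  rw [Finset.sum_mul]
  simp only [MvPolynomial.coeff_sum]
  rw [Finset.sum_comm]
  apply Finset.sum_eq_zero
  intro i _
  have hin : (i : ℕ) < n := i.isLt
  by_cases hi : (i : ℕ) + m ≤ n - 1
  · -- paired case
    set i2 : Fin n := ⟨(i : ℕ) + m, by omega⟩ with hi2
    have hi2v : (i2 : ℕ) = (i : ℕ) + m := rfl
    have hii2 : i ≠ i2 := by
      intro h
      have := congrArg Fin.val h
      rw [hi2v] at this
      omega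
    set c : ℤ := coeff (Av n m i) H with hc
    have hstep : ∀ j : Fin n, coeff (Bv n j) ((X i : MvPolynomial (Fin n) ℤ) ^ m * H)
        = (if j = i then c else 0) + (if j = i2 then -c else 0) := by
      intro j
      have hjn : (j : ℕ) < n := j.isLt
      rw [MvPolynomial.X_pow_eq_monomial, MvPolynomial.coeff_monomial_mul']
      rcases eq_or_ne j i with rfl | hji
      · rw [if_pos, if_pos rfl, if_neg hii2, add_zero, one_mul]
        · congr 1
          ext k
          have hkn : (k : ℕ) < n := k.isLt
          rw [Finsupp.tsub_apply]
          simp only [Bv, Av, fvec_apply, Finsupp.single_apply, Fin.ext_iff]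
          split_ifs <;> omega
        · rw [Finsupp.single_le_iff]
          simp only [Bv, fvec_apply, Fin.ext_iff]
          split_ifs <;> omega
      · have hji' : (j : ℕ) ≠ (i : ℕ) := fun h => hji (Fin.ext h)
        rcases eq_or_ne j i2 with rfl | hji2
        · rw [if_neg hji, if_pos rfl, zero_add, if_pos, one_mul]
          · have hv : Bv n i2 - Finsupp.single i m
                = Finsupp.mapDomain (⇑(Equiv.swap i i2)) (Av n m i) := by
              ext k
              have hkn : (k : ℕ) < n := k.isLt
              rw [Finsupp.tsub_apply, Finsupp.mapDomain_equiv_apply, Equiv.symm_swap]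
              rcases eq_or_ne k i with rfl | hki
              · rw [Equiv.swap_apply_left]
                simp only [Bv, Av, fvec_apply, Finsupp.single_apply, Fin.ext_iff, hi2v]
                split_ifs <;> omega
              rcases eq_or_ne k i2 with rfl | hki2
              · rw [Equiv.swap_apply_right]
                simp only [Bv, Av, fvec_apply, Finsupp.single_apply, Fin.ext_iff, hi2v]
                split_ifs <;> omega
              · have hki' : (k : ℕ) ≠ (i : ℕ) := fun h => hki (Fin.ext h)
                have hki2' : (k : ℕ) ≠ (i2 : ℕ) := fun h => hki2 (Fin.ext h)
                rw [Equiv.swap_apply_of_ne_of_ne hki hki2]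
                simp only [Bv, Av, fvec_apply, Finsupp.single_apply, Fin.ext_iff, hi2v]
                split_ifs <;> omega
            rw [hv, coeff_mapDomain_antisym hH, Equiv.Perm.sign_swap hii2, hc]
            simp only [Units.val_neg, Units.val_one, neg_mul, one_mul]
          · rw [Finsupp.single_le_iff]
            simp only [Bv, fvec_apply, Fin.ext_iff, hi2v]
            split_ifs <;> omega
        · have hji2' : (j : ℕ) ≠ (i2 : ℕ) := fun h => hji2 (Fin.ext h)
          rw [if_neg hji, if_neg hji2, add_zero, if_pos, one_mul]
          · refine coeff_eq_zero_rep hH _ hii2 ?_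
            rw [Finsupp.tsub_apply, Finsupp.tsub_apply]
            simp only [Bv, fvec_apply, Finsupp.single_apply, Fin.ext_iff, hi2v]
            rw [hi2v] at hji2'
            split_ifs <;> omega
          · rw [Finsupp.single_le_iff]
            simp only [Bv, fvec_apply, Fin.ext_iff]
            split_ifs <;> omega
    rw [Finset.sum_congr rfl fun j _ => hstep j, Finset.sum_add_distrib,
      Finset.sum_ite_eq' Finset.univ i (fun _ => c),
      Finset.sum_ite_eq' Finset.univ i2 (fun _ => -c)]
    simp
  · -- unpaired case
    apply Finset.sum_eq_zero
    intro j _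
    have hjn : (j : ℕ) < n := j.isLt
    rw [MvPolynomial.X_pow_eq_monomial, MvPolynomial.coeff_monomial_mul']
    rcases eq_or_ne j i with rfl | hji
    · rw [if_pos, one_mul]
      · set k' : Fin n := ⟨(j : ℕ) - (n - m), by omega⟩ with hk'
        have hk'v : (k' : ℕ) = (j : ℕ) - (n - m) := rfl
        have hk'j : k' ≠ j := by
          intro h
          have := congrArg Fin.val h
          rw [hk'v] at this
          omega
        refine coeff_eq_zero_rep hH _ hk'j ?_
        rw [Finsupp.tsub_apply, Finsupp.tsub_apply]
        have hk'j' : (k' : ℕ) ≠ (j : ℕ) := fun h => hk'j (Fin.ext h)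
        simp only [Bv, fvec_apply, Finsupp.single_apply, Fin.ext_iff, hk'v]
        rw [hk'v] at hk'j'
        split_ifs <;> omega
      · rw [Finsupp.single_le_iff]
        simp only [Bv, fvec_apply, Fin.ext_iff]
        split_ifs <;> omega
    · have hji' : (j : ℕ) ≠ (i : ℕ) := fun h => hji (Fin.ext h)
      rw [if_neg]
      rw [Finsupp.single_le_iff]
      simp only [Bv, fvec_apply, Fin.ext_iff]
      split_ifs <;> omega

private lemma key_base (n : ℕ) (hn : 1 ≤ n) :
    ∑ j : Fin n, coeff (Bv n j) (psumP n n * vand n) = (n : ℤ) := by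
  rw [psumP, Finset.sum_mul]
  simp only [MvPolynomial.coeff_sum]
  have hrow : ∀ j : Fin n,
      (∑ i : Fin n, coeff (Bv n j) ((X i : MvPolynomial (Fin n) ℤ) ^ n * vand n)) = 1 := by
    intro j
    rw [Finset.sum_eq_single j]
    · rw [MvPolynomial.X_pow_eq_monomial, MvPolynomial.coeff_monomial_mul', if_pos, one_mul]
      · have hd : Bv n j - Finsupp.single j n = dvec n := by
          ext k
          have hkn : (k : ℕ) < n := k.isLt
          rw [Finsupp.tsub_apply]
          simp only [Bv, dvec, fvec_apply, Finsupp.single_apply, Fin.ext_iff]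
          split_ifs <;> omega
        rw [hd, coeff_dvec_vand]
      · rw [Finsupp.single_le_iff]
        have hjn : (j : ℕ) < n := j.isLt
        simp only [Bv, fvec_apply, Fin.ext_iff]
        split_ifs <;> omega
    · intro i _ hij
      have hij' : (i : ℕ) ≠ (j : ℕ) := fun h => hij (Fin.ext h)
      rw [MvPolynomial.X_pow_eq_monomial, MvPolynomial.coeff_monomial_mul', if_neg]
      rw [Finsupp.single_le_iff]
      have hin : (i : ℕ) < n := i.isLt
      simp only [Bv, fvec_apply, Fin.ext_iff]
      split_ifs <;> omega
    · intro h
      exact absurd (Finset.mem_univ j) h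
  rw [Finset.sum_congr rfl fun j _ => hrow j]
  simp [Finset.card_univ]

private lemma key_sum (n : ℕ) (hn : 1 ≤ n) (ν : Multiset ℕ) (hs : ν.sum = n)
    (hp : ∀ x ∈ ν, 1 ≤ x) :
    ∑ j : Fin n, coeff (Bv n j) (pMult n ν * vand n)
      = if Multiset.card ν = 1 then (n : ℤ) else 0 := by
  have hne : ν ≠ 0 := by
    rintro rfl
    simp only [Multiset.sum_zero] at hs
    omega
  obtain ⟨m, hmem⟩ := Multiset.exists_mem_of_ne_zero hne
  obtain ⟨ν₀, rfl⟩ := Multiset.exists_cons_of_mem hmem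
  rw [show pMult n (m ::ₘ ν₀) = psumP n m * pMult n ν₀ by
    rw [pMult, Multiset.map_cons, Multiset.prod_cons, pMult]]
  by_cases h0 : ν₀ = 0
  · subst h0
    have hm : m = n := by simpa using hs
    subst hm
    rw [if_pos (by simp)]
    rw [show pMult m (0 : Multiset ℕ) = 1 by simp [pMult], mul_one]
    exact key_base m hn
  · rw [if_neg]
    · rw [mul_assoc]
      have hm1 : 1 ≤ m := hp m (Multiset.mem_cons_self m ν₀)
      have hmn : m < n := by
        obtain ⟨a, ha⟩ := Multiset.exists_mem_of_ne_zero h0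
        have h1 : 1 ≤ a := hp a (Multiset.mem_cons_of_mem ha)
        have h2 : a ≤ ν₀.sum := Multiset.le_sum_of_mem ha
        rw [Multiset.sum_cons] at hs
        omega
      exact key_zero n m hm1 hmn _ (isAntisym_pMult_vand n ν₀)
    · simp only [Multiset.card_cons]
      have : 0 < Multiset.card ν₀ := Multiset.card_pos.mpr h0
      omega

private lemma getD_rep (a d : ℕ) : ∀ k i : ℕ, (List.replicate k a).getD i d = if i < k then a else d := by
  intro k
  induction k with
  | zero => intro i; simp
  | succ k ih =>
      intro i
      cases i with
      | zero => rw [List.replicate_succ]; simp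
      | succ i =>
          rw [List.replicate_succ, List.getD_cons_succ, ih]
          by_cases h : i < k
          · rw [if_pos h, if_pos (by omega)]
          · rw [if_neg h, if_neg (by omega)]

private lemma sorted_rep_app (k r : ℕ) (h1 : 1 ≤ r) :
    List.Pairwise (· ≤ ·) (List.replicate k 1 ++ [r]) := by
  rw [List.pairwise_append]
  refine ⟨List.pairwise_replicate.mpr (Or.inr (le_refl 1)), by simp, ?_⟩
  intro a ha b hb
  rw [List.eq_of_mem_replicate ha, List.mem_singleton.mp hb]
  exact h1

private lemma sort_hook (n r : ℕ) (h1 : 1 ≤ r) :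
    Multiset.sort (r ::ₘ Multiset.replicate (n - r) 1) (· ≤ ·)
      = List.replicate (n - r) 1 ++ [r] := by
  apply List.Perm.eq_of_pairwise' (Multiset.pairwise_sort _ _) (sorted_rep_app _ r h1)
  refine Multiset.coe_eq_coe.mp ?_
  rw [Multiset.sort_eq]
  rw [show ((List.replicate (n - r) 1 ++ [r] : List ℕ) : Multiset ℕ)
      = (List.replicate (n - r) 1 : List ℕ) + ([r] : List ℕ) from rfl]
  rw [Multiset.coe_replicate]
  rw [show (([r] : List ℕ) : Multiset ℕ) = {r} from rfl]
  rw [add_comm, Multiset.singleton_add]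

private lemma partAt_hook (n r : ℕ) (h1 : 1 ≤ r) (h2 : r ≤ n) (i : ℕ) :
    partAtM ((hookPart n r).parts) i = if i = 0 then r else if i ≤ n - r then 1 else 0 := by
  rw [show (hookPart n r).parts = r ::ₘ Multiset.replicate (n - r) 1 by
    rw [hookPart, dif_pos ⟨h1, h2⟩]]
  rw [partAtM, sort_hook n r h1, List.reverse_append, List.reverse_replicate]
  cases i with
  | zero => simp
  | succ i =>
      rw [show ([r].reverse ++ List.replicate (n - r) 1 : List ℕ)
          = r :: List.replicate (n - r) 1 from rfl]
      rw [List.getD_cons_succ, getD_rep]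
      simp only [Nat.succ_ne_zero, if_false]
      by_cases h : i < n - r
      · rw [if_pos h, if_pos (by omega)]
      · rw [if_neg h, if_neg (by omega)]

private lemma expOf_hook (N r : ℕ) (h1 : 1 ≤ r) (h2 : r ≤ N + 1) :
    expOfM (N + 1) ((hookPart (N + 1) r).parts)
      = Finsupp.mapDomain (⇑(Fin.cycleRange (⟨N + 1 - r, by omega⟩ : Fin (N + 1))))
          (Bv (N + 1) ⟨N + 1 - r, by omega⟩) := by
  set j' : Fin (N + 1) := ⟨N + 1 - r, by omega⟩ with hj'
  have main : ∀ k : Fin (N + 1),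
      (expOfM (N + 1) ((hookPart (N + 1) r).parts)) ((Fin.cycleRange j') k)
        = Bv (N + 1) j' k := by
    intro k
    have hexp : ∀ t : Fin (N + 1), (expOfM (N + 1) ((hookPart (N + 1) r).parts)) t
        = partAtM ((hookPart (N + 1) r).parts) (t : ℕ) + (N + 1 - 1 - (t : ℕ)) := fun t => rfl
    have hkN : (k : ℕ) < N + 1 := k.isLt
    rcases lt_trichotomy k j' with hk | hk | hk
    · have hc : ((Fin.cycleRange j') k : ℕ) = (k : ℕ) + 1 := Fin.coe_cycleRange_of_lt hk
      rw [hexp, hc, partAt_hook _ _ h1 h2]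
      have hkv : (k : ℕ) < N + 1 - r := hk
      rw [if_neg (by omega), if_pos (by omega)]
      simp only [Bv, fvec_apply, if_neg (Fin.ne_of_lt hk)]
      omega
    · rw [hexp, hk, Fin.cycleRange_self]
      have hz : ((0 : Fin (N + 1)) : ℕ) = 0 := rfl
      rw [hz, partAt_hook _ _ h1 h2, if_pos rfl]
      have hj'v : (j' : ℕ) = N + 1 - r := rfl
      simp only [Bv, fvec_apply, eq_self_iff_true, if_true]
      omega
    · rw [hexp, Fin.cycleRange_of_gt hk, partAt_hook _ _ h1 h2]
      have hkv : N + 1 - r < (k : ℕ) := hk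
      rw [if_neg (by omega), if_neg (by omega)]
      simp only [Bv, fvec_apply, if_neg (Fin.ne_of_gt hk)]
      omega
  ext k
  rw [Finsupp.mapDomain_equiv_apply]
  have h := main ((Fin.cycleRange j').symm k)
  rw [Equiv.apply_symm_apply] at h
  exact h

private lemma hookXchar (N r : ℕ) (h1 : 1 ≤ r) (h2 : r ≤ N + 1) (ν : Multiset ℕ) :
    (-1 : ℤ) ^ (N + 1 - r) * XcharMM (N + 1) ((hookPart (N + 1) r).parts) ν
      = MvPolynomial.coeff (Bv (N + 1) ⟨N + 1 - r, by omega⟩) (pMult (N + 1) ν * vand (N + 1)) := by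
  rw [XcharMM, expOf_hook N r h1 h2,
    coeff_mapDomain_antisym (isAntisym_pMult_vand _ _), Fin.sign_cycleRange]
  have hu : ((((-1 : ℤˣ) ^ ((⟨N + 1 - r, by omega⟩ : Fin (N + 1)) : ℕ)) : ℤˣ) : ℤ)
      = (-1 : ℤ) ^ (N + 1 - r) := by
    rw [Units.val_pow_eq_pow_val, Units.val_neg, Units.val_one]
  rw [hu, ← mul_assoc, ← mul_pow]
  norm_num

end Statement8Aux

/-- **Λ in terms of hook characters** (Proposition 9.7): for squarefree monic `f` of
degree `n`, `Λ(f) = ∑_{r=1}^n (-1)^{n-r} X^{(r,1^{n-r})}(τ_f)`. -/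
theorem statement8 (n : ℕ) (hn : 1 ≤ n) :
    ∀ (F : Type) [Field F] [Fintype F], ∀ f : Polynomial F,
      f.Monic → f.natDegree = n → Squarefree f →
      vonM F f =
        ∑ r ∈ Finset.Icc 1 n, (-1 : ℂ) ^ (n - r) * (Xchar (hookPart n r) (factType F f) : ℂ) := by
  obtain ⟨N, rfl⟩ : ∃ N, n = N + 1 := ⟨n - 1, by omega⟩
  intro F _ _ f hm hdeg hsf
  have hf0 : f ≠ 0 := hm.ne_zero
  have hnodup : (normalizedFactors f).Nodup :=
    (UniqueFactorizationMonoid.squarefree_iff_nodup_normalizedFactors hf0).mp hsf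
  have h0mem : (0 : Polynomial F) ∉ normalizedFactors f := fun h =>
    not_irreducible_zero (irreducible_of_normalized_factor 0 h)
  have hsum : ((normalizedFactors f).map natDegree).sum = N + 1 := by
    have h1 : (normalizedFactors f).prod.natDegree
        = ((normalizedFactors f).map natDegree).sum :=
      Polynomial.natDegree_multiset_prod _ h0mem
    obtain ⟨u, hu⟩ := UniqueFactorizationMonoid.prod_normalizedFactors hf0
    have hprod0 : (normalizedFactors f).prod ≠ 0 := by
      intro h
      rw [h, zero_mul] at hu
      exact hf0 hu.symm
    have h2 : f.natDegree = (normalizedFactors f).prod.natDegree := by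
      conv_lhs => rw [← hu]
      rw [Polynomial.natDegree_mul hprod0 (Units.ne_zero u),
        Polynomial.natDegree_eq_zero_of_isUnit u.isUnit, add_zero]
    rw [← h1, ← h2, hdeg]
  have hpos : ∀ x ∈ factType F f, 1 ≤ x := by
    intro x hx
    obtain ⟨P, hP, rfl⟩ := Multiset.mem_map.mp hx
    exact (irreducible_of_normalized_factor P hP).natDegree_pos
  have hkey := key_sum (N + 1) (by omega) (factType F f)
    (show (factType F f).sum = N + 1 from hsum) hpos
  have hRHS : (∑ r ∈ Finset.Icc 1 (N + 1),
        (-1 : ℂ) ^ (N + 1 - r) * ((Xchar (hookPart (N + 1) r) (factType F f) : ℤ) : ℂ))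
      = ((∑ j : Fin (N + 1),
          MvPolynomial.coeff (Bv (N + 1) j) (pMult (N + 1) (factType F f) * vand (N + 1)) : ℤ) : ℂ) := by
    push_cast
    refine Finset.sum_bij'
      (i := fun (r : ℕ) (hr : r ∈ Finset.Icc 1 (N + 1)) =>
        (⟨N + 1 - r, by have := Finset.mem_Icc.mp hr; omega⟩ : Fin (N + 1)))
      (j := fun (j : Fin (N + 1)) _ => N + 1 - (j : ℕ)) ?_ ?_ ?_ ?_ ?_
    · intro r hr
      exact Finset.mem_univ _
    · intro j _
      have hjlt := j.isLt
      simp only [Finset.mem_Icc]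
      omega
    · intro r hr
      have hr' := Finset.mem_Icc.mp hr
      simp only []
      omega
    · intro j _
      have hjlt := j.isLt
      refine Fin.ext ?_
      simp only [Fin.ext_iff]
      omega
    · intro r hr
      obtain ⟨h1, h2⟩ := Finset.mem_Icc.mp hr
      have hZ := hookXchar N r h1 h2 (factType F f)
      have hZC := congrArg (fun z : ℤ => (z : ℂ)) hZ
      push_cast at hZC
      rw [show (Xchar (hookPart (N + 1) r) (factType F f))
          = XcharMM (N + 1) ((hookPart (N + 1) r).parts) (factType F f) from rfl]
      exact hZC
  rw [hRHS, hkey]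
  rw [vonM, Multiset.dedup_eq_self.mpr hnodup]
  have hcard : Multiset.card (normalizedFactors f) = Multiset.card (factType F f) := by
    rw [factType, Multiset.card_map]
  by_cases hc : Multiset.card (factType F f) = 1
  · rw [if_pos (by rw [hcard]; exact hc), if_pos hc, hsum]
    push_cast
    ring
  · rw [if_neg (by rw [hcard]; exact hc), if_neg hc]
    simp

end PaperFF
end
end

section
/- Fix n ≥ 1. Every factorization function supported on monic polynomials of degree n is a finite linear combination, with coefficients independent of the prime power q, of the functions ι_{(𝐦,𝐞)} = ι_{m_1,e_1} ⋆ ι_{m_2,e_2} ⋆ ⋯ ⋆ ι_{m_ℓ,e_ℓ} with m_1 e_1 + ⋯ + m_ℓ e_ℓ = n. -/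
open Polynomial UniqueFactorizationMonoid
open scoped Classical

noncomputable section
namespace PaperFF

/-! ### Arithmetic in 𝔽_q[T] -/

variable (F : Type) [Field F] [Fintype F]

/-! For a list `L = [(m₁, e₁), …]` with all `eᵢ > 0`, the value `ι_L(f)` depends only on the
extended type `t` of `f`: it counts the ways of stripping off `P₁^{e₁}, P₂^{e₂}, …` in turn.
This count vanishes unless `t` has total degree `Σ mᵢeᵢ` and at most as many entries as `L`,
and among types with exactly as many entries it is nonzero only at `t = L`. Ordering the types
of degree `n` by their number of entries, the matrix `(ι_u(t))` is therefore triangular with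
nonzero diagonal, so every function of the type is a `q`-independent combination of the `ι_u`. -/

def dropPow (x : ℕ × ℕ) (e : ℕ) (t : Multiset (ℕ × ℕ)) : Multiset (ℕ × ℕ) :=
  if x.2 = e then t.erase x else (x.1, x.2 - e) ::ₘ t.erase x

/-- The value of `ι_L` at any monic polynomial of extended type `t`, when all exponents in `L`
are positive: an entry `x = (deg P, v_P)` of `t` contributes one term for each of the
`count x t` primes `P` it stands for. -/
def iotaCount : List (ℕ × ℕ) → Multiset (ℕ × ℕ) → ℕ
  | [], t => if t = 0 then 1 else 0
  | (m, e) :: L, t =>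
      (t.map fun x => if x.1 = m ∧ e ≤ x.2 then iotaCount L (dropPow x e t) else 0).sum

lemma totalDeg_cons (x : ℕ × ℕ) (t : Multiset (ℕ × ℕ)) :
    totalDeg (x ::ₘ t) = x.1 * x.2 + totalDeg t := by
  simp [totalDeg]

lemma totalDeg_coe (L : List (ℕ × ℕ)) :
    totalDeg (L : Multiset (ℕ × ℕ)) = (L.map fun p : ℕ × ℕ => p.1 * p.2).sum := by
  simp [totalDeg]

lemma totalDeg_dropPow {x : ℕ × ℕ} {t : Multiset (ℕ × ℕ)} (hx : x ∈ t) {e : ℕ} (he : e ≤ x.2) :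
    totalDeg (dropPow x e t) + x.1 * e = totalDeg t := by
  have herase := totalDeg_cons x (t.erase x)
  rw [Multiset.cons_erase hx] at herase
  unfold dropPow
  split_ifs with hxe
  · rw [herase, hxe, add_comm]
  · rw [totalDeg_cons, herase, add_right_comm, ← Nat.mul_add, Nat.sub_add_cancel he]

lemma card_le_totalDeg {t : Multiset (ℕ × ℕ)} (ht : ∀ x ∈ t, 0 < x.1 ∧ 0 < x.2) :
    Multiset.card t ≤ totalDeg t := by
  have h := Multiset.card_nsmul_le_sum (s := t.map fun p => p.1 * p.2) (a := 1)
    (by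
      rintro _ hy
      obtain ⟨x, hx, rfl⟩ := Multiset.mem_map.1 hy
      exact Nat.mul_pos (ht x hx).1 (ht x hx).2)
  simpa [totalDeg] using h

lemma exists_of_iotaCount_cons_ne_zero {m e : ℕ} {L : List (ℕ × ℕ)} {t : Multiset (ℕ × ℕ)}
    (h : iotaCount ((m, e) :: L) t ≠ 0) :
    ∃ x ∈ t, x.1 = m ∧ e ≤ x.2 ∧ iotaCount L (dropPow x e t) ≠ 0 := by
  by_contra! hzero
  refine h (Multiset.sum_eq_zero fun y hy => ?_)
  obtain ⟨x, hx, rfl⟩ := Multiset.mem_map.1 hy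
  split_ifs with hxme
  · exact hzero x hx hxme.1 hxme.2
  · rfl

lemma totalDeg_eq_of_iotaCount_ne_zero :
    ∀ {L : List (ℕ × ℕ)} {t : Multiset (ℕ × ℕ)}, iotaCount L t ≠ 0 → totalDeg t = totalDeg L
  | [], t, h => by
    rw [show t = 0 by simpa [iotaCount] using h]
    rfl
  | (m, e) :: L, t, h => by
    obtain ⟨x, hx, rfl, hle, hL⟩ := exists_of_iotaCount_cons_ne_zero h
    rw [← totalDeg_dropPow hx hle, totalDeg_eq_of_iotaCount_ne_zero hL, ← Multiset.cons_coe,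
      totalDeg_cons, add_comm]

lemma eq_or_card_lt_of_iotaCount_ne_zero :
    ∀ {L : List (ℕ × ℕ)} {t : Multiset (ℕ × ℕ)}, iotaCount L t ≠ 0 →
      t = L ∨ Multiset.card t < L.length
  | [], t, h => Or.inl (by simpa [iotaCount] using h)
  | (m, e) :: L, t, h => by
    obtain ⟨x, hx, rfl, hle, hL⟩ := exists_of_iotaCount_cons_ne_zero h
    have hcard := Multiset.card_erase_add_one hx
    have ih := eq_or_card_lt_of_iotaCount_ne_zero hL
    unfold dropPow at ih
    split_ifs at ih with hxe
    · rcases ih with ih | ih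
      · left
        rw [← Multiset.cons_erase hx, ih, ← hxe]
        rfl
      · right
        simp only [List.length_cons]
        omega
    · right
      simp only [Multiset.card_cons, List.length_cons] at ih ⊢
      rcases ih with ih | ih
      · have := congrArg Multiset.card ih
        simp only [Multiset.card_cons, Multiset.coe_card] at this
        omega
      · omega

lemma iotaCount_coe_pos : ∀ L : List (ℕ × ℕ), 0 < iotaCount L L
  | [] => by simp [iotaCount]
  | (m, e) :: L => by
    have hdrop : dropPow (m, e) e ((m, e) :: L : List (ℕ × ℕ)) = L := by
      rw [dropPow, if_pos rfl, ← Multiset.cons_coe, Multiset.erase_cons_head]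
    refine lt_of_lt_of_le ?_ (Multiset.le_sum_of_mem (Multiset.mem_map_of_mem _
      (Multiset.mem_coe.2 List.mem_cons_self)))
    rw [if_pos ⟨rfl, le_rfl⟩, hdrop]
    exact iotaCount_coe_pos L

theorem span_range_eq_top_of_triangular {K ι : Type*} [DivisionRing K] [Fintype ι]
    [DecidableEq ι] (v : ι → ι → K) (r : ι → ℕ) (hv : ∀ i j, v i j ≠ 0 → j = i ∨ r j < r i)
    (hdiag : ∀ i, v i i ≠ 0) : Submodule.span K (Set.range v) = ⊤ := by
  have single_mem : ∀ k i, r i = k → Pi.single i 1 ∈ Submodule.span K (Set.range v) := by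
    intro k
    induction k using Nat.strong_induction_on with
    | _ k ih =>
      rintro i rfl
      have hexpand : v i = v i i • Pi.single i 1 +
          ∑ j ∈ Finset.univ.erase i, v i j • Pi.single j (1 : K) := by
        rw [add_comm, Finset.sum_erase_add _ _ (Finset.mem_univ i)]
        ext j
        simp [Finset.sum_apply, Pi.single_apply]
      have hsolve : Pi.single i 1 = (v i i)⁻¹ •
          (v i - ∑ j ∈ Finset.univ.erase i, v i j • Pi.single j (1 : K)) := by
        rw [eq_inv_smul_iff₀ (hdiag i), eq_sub_iff_add_eq, ← hexpand]
      rw [hsolve]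
      refine Submodule.smul_mem _ _ (Submodule.sub_mem _ (Submodule.subset_span ⟨i, rfl⟩)
        (Submodule.sum_mem _ fun j hj => ?_))
      rcases eq_or_ne (v i j) 0 with hzero | hne
      · rw [hzero, zero_smul]
        exact Submodule.zero_mem _
      · rcases hv i j hne with rfl | hlt
        · exact absurd hj (Finset.notMem_erase _ _)
        · exact Submodule.smul_mem _ _ (ih _ hlt j rfl)
  rw [eq_top_iff, ← (Pi.basisFun K ι).span_eq, Submodule.span_le]
  rintro _ ⟨i, rfl⟩
  simpa using single_mem _ i rfl

def extTypesOfDeg (n : ℕ) : Finset (Multiset (ℕ × ℕ)) :=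
  ((n • (Finset.Icc 1 n ×ˢ Finset.Icc 1 n).val).powerset.toFinset).filter
    fun t => totalDeg t = n ∧ ∀ x ∈ t, 0 < x.1 ∧ 0 < x.2

lemma mem_extTypesOfDeg {n : ℕ} {t : Multiset (ℕ × ℕ)} :
    t ∈ extTypesOfDeg n ↔ totalDeg t = n ∧ ∀ x ∈ t, 0 < x.1 ∧ 0 < x.2 := by
  rw [extTypesOfDeg, Finset.mem_filter, and_iff_right_iff_imp]
  rintro ⟨hdeg, ht⟩
  rw [Multiset.mem_toFinset, Multiset.mem_powerset, Multiset.le_iff_count]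
  intro x
  by_cases hx : x ∈ t
  · have hmul : x.1 * x.2 ≤ n :=
      hdeg ▸ Multiset.le_sum_of_mem (Multiset.mem_map_of_mem (fun p => p.1 * p.2) hx)
    have hxS : x ∈ Finset.Icc 1 n ×ˢ Finset.Icc 1 n := by
      obtain ⟨h1, h2⟩ := ht x hx
      simp only [Finset.mem_product, Finset.mem_Icc]
      exact ⟨⟨h1, (Nat.le_mul_of_pos_right _ h2).trans hmul⟩,
        ⟨h2, (Nat.le_mul_of_pos_left _ h1).trans hmul⟩⟩
    rw [Multiset.count_nsmul, Multiset.count_eq_one_of_mem (Finset.nodup _) hxS, mul_one]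
    exact (Multiset.count_le_card x t).trans (hdeg ▸ card_le_totalDeg ht)
  · rw [Multiset.count_eq_zero_of_notMem hx]
    exact Nat.zero_le _

theorem exists_iotaCount_expansion (n : ℕ) (a : Multiset (ℕ × ℕ) → ℂ)
    (ha : ∀ t, totalDeg t ≠ n → a t = 0) :
    ∃ c : Multiset (ℕ × ℕ) → ℂ, ∀ t, (∀ x ∈ t, 0 < x.1 ∧ 0 < x.2) →
      a t = ∑ u ∈ extTypesOfDeg n, c u * iotaCount u.toList t := by
  set T := extTypesOfDeg n
  have hspan := span_range_eq_top_of_triangular (ι := T)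
    (fun u t => (iotaCount u.1.toList t.1 : ℂ)) (fun u => Multiset.card u.1)
    (fun u t h => by
      have := eq_or_card_lt_of_iotaCount_ne_zero (L := u.1.toList) (t := t.1) (by exact_mod_cast h)
      rwa [Multiset.coe_toList, Multiset.length_toList, ← Subtype.ext_iff] at this)
    (fun u => by simpa using (iotaCount_coe_pos u.1.toList).ne')
  obtain ⟨c, hc⟩ := (Submodule.mem_span_range_iff_exists_fun ℂ).1
    (hspan ▸ Submodule.mem_top (x := fun t : T => a t))
  refine ⟨fun u => if hu : u ∈ T then c ⟨u, hu⟩ else 0, fun t ht => ?_⟩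
  by_cases htT : t ∈ T
  · rw [← congrFun hc ⟨t, htT⟩, Finset.sum_apply, ← Finset.sum_coe_sort T]
    simp
  · have hdeg : totalDeg t ≠ n := fun h => htT (mem_extTypesOfDeg.2 ⟨h, ht⟩)
    refine (ha t hdeg).trans (Finset.sum_eq_zero fun u hu => ?_).symm
    have hzero : iotaCount u.toList t = 0 := by
      by_contra h
      apply hdeg
      rw [totalDeg_eq_of_iotaCount_ne_zero h, Multiset.coe_toList, (mem_extTypesOfDeg.1 hu).1]
    rw [hzero, Nat.cast_zero, mul_zero]

lemma dedup_map_count_eq_dropPow {α : Type*} [DecidableEq α] (d : α → ℕ)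
    (s : Multiset α) (P : α) {e : ℕ} (he : 0 < e) :
    s.dedup.map (fun Q => (d Q, s.count Q)) =
      dropPow (d P, (Multiset.replicate e P + s).count P) e
        ((Multiset.replicate e P + s).dedup.map
          fun Q => (d Q, (Multiset.replicate e P + s).count Q)) := by
  set t := Multiset.replicate e P + s
  have hcount : ∀ Q ≠ P, t.count Q = s.count Q := fun Q hQ => by
    simp [t, Multiset.count_replicate, Ne.symm hQ]
  have hmap : ∀ u : Multiset α, P ∉ u →
      u.map (fun Q => (d Q, t.count Q)) = u.map fun Q => (d Q, s.count Q) :=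
    fun u hu => Multiset.map_congr rfl fun Q hQ => by
      rw [hcount Q (ne_of_mem_of_not_mem hQ hu)]
  have hmem : ∀ Q, Q ∈ t ↔ Q = P ∨ Q ∈ s := fun Q => by
    simp [t, Multiset.mem_replicate, he.ne']
  have htP : t.count P = e + s.count P := by simp [t]
  by_cases hPs : P ∈ s
  · have hdedup : t.dedup = s.dedup := Multiset.dedup_ext.2 fun Q => by
      rw [hmem]
      exact ⟨fun h => h.elim (· ▸ hPs) id, Or.inr⟩
    have hsplit := Multiset.cons_erase (Multiset.mem_dedup.2 hPs)
    have hPr : P ∉ s.dedup.erase P := (Multiset.nodup_dedup s).notMem_erase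
    rw [hdedup, ← hsplit, Multiset.map_cons, Multiset.map_cons, dropPow, htP,
      if_neg (by simpa using hPs), Multiset.erase_cons_head, hmap _ hPr, Nat.add_sub_cancel_left]
  · have hdedup : t.dedup = P ::ₘ s.dedup := by
      rw [← Multiset.dedup_cons_of_notMem hPs]
      exact Multiset.dedup_ext.2 fun Q => by rw [hmem, Multiset.mem_cons]
    rw [hdedup, Multiset.map_cons, dropPow, htP, Multiset.count_eq_zero_of_notMem hPs, add_zero,
      if_pos rfl, Multiset.erase_cons_head, hmap _ (by simpa using hPs)]

lemma mul_divByMonic_of_dvd {R : Type*} [CommRing R] {p q : R[X]} (hq : q.Monic)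
    (h : q ∣ p) : q * (p /ₘ q) = p := by
  obtain ⟨r, rfl⟩ := h
  rw [mul_divByMonic_cancel_left _ hq]

lemma normalizedFactors_pow_of_monic {K : Type*} [Field K] {P : K[X]} (hP : Irreducible P)
    (hPm : P.Monic) (e : ℕ) : normalizedFactors (P ^ e) = Multiset.replicate e P := by
  rw [normalizedFactors_pow, normalizedFactors_irreducible hP, hPm.normalize_eq_self,
    Multiset.nsmul_singleton]

lemma pow_dvd_iff_le_count_normalizedFactors {K : Type*} [Field K] {f P : K[X]} (hf : f ≠ 0)
    (hP : Irreducible P) (hPm : P.Monic) (e : ℕ) :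
    P ^ e ∣ f ↔ e ≤ (normalizedFactors f).count P := by
  rw [dvd_iff_normalizedFactors_le_normalizedFactors (pow_ne_zero _ hP.ne_zero) hf,
    normalizedFactors_pow_of_monic hP hPm, ← Multiset.le_count_iff_replicate_le]

def powFactors {K : Type*} [Field K] (f : K[X]) (m e : ℕ) : Finset K[X] :=
  (normalizedFactors f).toFinset.filter
    fun P => P.natDegree = m ∧ e ≤ (normalizedFactors f).count P

lemma mem_powFactors {K : Type*} [Field K] {f P : K[X]} (hf : f ≠ 0) {m e : ℕ} (he : 0 < e) :
    P ∈ powFactors f m e ↔ Irreducible P ∧ P.Monic ∧ P.natDegree = m ∧ P ^ e ∣ f := by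
  simp only [powFactors, Finset.mem_filter, Multiset.mem_toFinset,
    Polynomial.mem_normalizedFactors_iff hf]
  constructor
  · rintro ⟨⟨hP, hPm, -⟩, hdeg, hle⟩
    exact ⟨hP, hPm, hdeg, (pow_dvd_iff_le_count_normalizedFactors hf hP hPm e).2 hle⟩
  · rintro ⟨hP, hPm, hdeg, hdvd⟩
    exact ⟨⟨hP, hPm, (dvd_pow_self P he.ne').trans hdvd⟩, hdeg,
      (pow_dvd_iff_le_count_normalizedFactors hf hP hPm e).1 hdvd⟩

lemma conv_iota_apply {F : Type} [Field F] {m e : ℕ} (he : 0 < e) (ψ : F[X] → ℂ) {f : F[X]}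
    (hf : f.Monic) :
    conv F (iota F m e) ψ f = ∑ P ∈ powFactors f m e, ψ (f /ₘ P ^ e) := by
  have hsupp : (Function.support fun p : F[X] × F[X] =>
      if p.1.Monic ∧ p.2.Monic ∧ p.1 * p.2 = f then iota F m e p.1 * ψ p.2 else 0) ⊆
      ((powFactors f m e).image fun P => (P ^ e, f /ₘ P ^ e) : Set (F[X] × F[X])) := by
    rintro ⟨g, h⟩ hgh
    obtain ⟨-, -, rfl, hne, -⟩ :
        g.Monic ∧ h.Monic ∧ g * h = f ∧ ¬iota F m e g = 0 ∧ ¬ψ h = 0 := by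
      simpa using hgh
    obtain ⟨P, hP, hPm, hdeg, rfl⟩ :
        ∃ P : F[X], Irreducible P ∧ P.Monic ∧ P.natDegree = m ∧ g = P ^ e := by
      by_contra hno
      simp [iota, hno] at hne
    refine Finset.mem_image.2 ⟨P, (mem_powFactors hf.ne_zero he).2
      ⟨hP, hPm, hdeg, dvd_mul_right _ _⟩, ?_⟩
    rw [mul_divByMonic_cancel_left _ (hPm.pow e)]
  rw [conv, finsum_eq_sum_of_support_subset _ hsupp, Finset.sum_image]
  · refine Finset.sum_congr rfl fun P hP => ?_
    obtain ⟨hP, hPm, hdeg, hdvd⟩ := (mem_powFactors hf.ne_zero he).1 hP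
    have hfac := mul_divByMonic_of_dvd (hPm.pow e) hdvd
    rw [if_pos ⟨hPm.pow e, (hPm.pow e).of_mul_monic_left (by rwa [hfac]), hfac⟩, iota,
      if_pos ⟨P, hP, hPm, hdeg, rfl⟩, one_mul]
  · intro P hP Q hQ hPQ
    obtain ⟨hP, hPm, -⟩ := (mem_powFactors hf.ne_zero he).1 hP
    obtain ⟨hQ, hQm, -⟩ := (mem_powFactors hf.ne_zero he).1 hQ
    have hpow := congrArg normalizedFactors (Prod.ext_iff.1 hPQ).1
    rw [normalizedFactors_pow_of_monic hP hPm, normalizedFactors_pow_of_monic hQ hQm] at hpow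
    exact Multiset.eq_of_mem_replicate (hpow ▸ Multiset.mem_replicate.2 ⟨he.ne', rfl⟩)

lemma extType_divByMonic_pow {F : Type} [Field F] {f P : F[X]} (hf : f.Monic)
    (hP : Irreducible P) (hPm : P.Monic) {e : ℕ} (he : 0 < e) (hdvd : P ^ e ∣ f) :
    extType F (f /ₘ P ^ e) =
      dropPow (P.natDegree, (normalizedFactors f).count P) e (extType F f) := by
  have hfac := mul_divByMonic_of_dvd (hPm.pow e) hdvd
  have hg : f /ₘ P ^ e ≠ 0 := right_ne_zero_of_mul (hfac ▸ hf.ne_zero)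
  have hnf : normalizedFactors f =
      Multiset.replicate e P + normalizedFactors (f /ₘ P ^ e) := by
    conv_lhs => rw [← hfac]
    rw [normalizedFactors_mul (pow_ne_zero _ hP.ne_zero) hg,
      normalizedFactors_pow_of_monic hP hPm]
  unfold extType
  rw [hnf]
  exact dedup_map_count_eq_dropPow natDegree _ P he

lemma extType_eq_zero_iff {F : Type} [Field F] {f : F[X]} (hf : f.Monic) :
    extType F f = 0 ↔ f = 1 := by
  rw [extType, Multiset.map_eq_zero, Multiset.dedup_eq_zero]
  constructor
  · intro h
    have hprod := prod_normalizedFactors hf.ne_zero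
    rw [h, Multiset.prod_zero] at hprod
    exact hf.eq_one_of_isUnit (associated_one_iff_isUnit.1 hprod.symm)
  · rintro rfl
    exact normalizedFactors_one

lemma pos_of_mem_extType {F : Type} [Field F] {f : F[X]} {x : ℕ × ℕ} (hx : x ∈ extType F f) :
    0 < x.1 ∧ 0 < x.2 := by
  obtain ⟨P, hP, rfl⟩ := Multiset.mem_map.1 hx
  rw [Multiset.mem_dedup] at hP
  exact ⟨(irreducible_of_normalized_factor P hP).natDegree_pos, Multiset.count_pos.2 hP⟩

lemma iotaL_eq_iotaCount {F : Type} [Field F] [Fintype F] :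
    ∀ (L : List (ℕ × ℕ)), (∀ me ∈ L, 0 < me.2) → ∀ {f : F[X]},
      f.Monic → iotaL F L f = iotaCount L (extType F f)
  | [], _, f, hf => by
    simp only [iotaL, iotaCount, extType_eq_zero_iff hf, Nat.cast_ite, Nat.cast_one,
      Nat.cast_zero]
  | (m, e) :: L, hL, f, hf => by
    have he : 0 < e := hL _ List.mem_cons_self
    have hL' : ∀ me ∈ L, 0 < me.2 := fun me hme => hL me (List.mem_cons_of_mem _ hme)
    have hrec : ∀ P ∈ powFactors f m e, iotaL F L (f /ₘ P ^ e) =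
        iotaCount L (dropPow (P.natDegree, (normalizedFactors f).count P) e (extType F f)) := by
      intro P hP
      obtain ⟨hP, hPm, -, hdvd⟩ := (mem_powFactors hf.ne_zero he).1 hP
      have hfac := mul_divByMonic_of_dvd (hPm.pow e) hdvd
      rw [iotaL_eq_iotaCount L hL' ((hPm.pow e).of_mul_monic_left (by rwa [hfac])),
        extType_divByMonic_pow hf hP hPm he hdvd]
    have hcount : iotaCount ((m, e) :: L) (extType F f) =
        (((normalizedFactors f).dedup.map
            fun P => (P.natDegree, (normalizedFactors f).count P)).map
          fun x => if x.1 = m ∧ e ≤ x.2 then iotaCount L (dropPow x e (extType F f)) else 0).sum :=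
      rfl
    show conv F (iota F m e) (iotaL F L) f = _
    rw [conv_iota_apply he _ hf, Finset.sum_congr rfl hrec, powFactors, Finset.sum_filter, hcount,
      Multiset.map_map, Nat.cast_multiset_sum, Multiset.map_map, Finset.sum_eq_multiset_sum,
      Multiset.toFinset_val]
    refine congrArg Multiset.sum (Multiset.map_congr rfl fun P _ => ?_)
    simp only [Function.comp_apply, Nat.cast_ite, Nat.cast_zero]

theorem statement13_general (n : ℕ) (a : Multiset (ℕ × ℕ) → ℂ)
    (ha : ∀ t, totalDeg t ≠ n → a t = 0) :
    ∃ (s : Finset (List (ℕ × ℕ))) (c : List (ℕ × ℕ) → ℂ),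
      (∀ L ∈ s, (L.map fun p : ℕ × ℕ => p.1 * p.2).sum = n) ∧
      ∀ (F : Type) [Field F] [Fintype F], ∀ f : Polynomial F, f.Monic →
        a (extType F f) = ∑ L ∈ s, c L * iotaL F L f := by
  obtain ⟨c, hc⟩ := exists_iotaCount_expansion n a ha
  refine ⟨(extTypesOfDeg n).image Multiset.toList, fun L => c L, ?_, ?_⟩
  · simp only [Finset.mem_image]
    rintro _ ⟨u, hu, rfl⟩
    rw [← totalDeg_coe, Multiset.coe_toList, (mem_extTypesOfDeg.1 hu).1]
  · intro F _ _ f hf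
    rw [Finset.sum_image fun u _ v _ h => by rw [← Multiset.coe_toList u, h, Multiset.coe_toList],
      hc _ fun _ hx => pos_of_mem_extType hx]
    refine Finset.sum_congr rfl fun u hu => ?_
    have hpos : ∀ me ∈ u.toList, 0 < me.2 :=
      fun me hme => ((mem_extTypesOfDeg.1 hu).2 me (Multiset.mem_toList.1 hme)).2
    rw [iotaL_eq_iotaCount _ hpos hf]
    simp only [Multiset.coe_toList]

/-- **A basis for factorization functions** (Proposition 6.1): every factorization function
supported on monic polynomials of degree `n` is a linear combination, with coefficients
independent of `q`, of the functions `ι_{(𝐦,𝐞)}` with `m₁e₁ + ⋯ + m_ℓe_ℓ = n`. -/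
theorem statement13 (n : ℕ) (hn : 1 ≤ n) (a : Multiset (ℕ × ℕ) → ℂ)
    (ha : ∀ t, totalDeg t ≠ n → a t = 0) :
    ∃ (s : Finset (List (ℕ × ℕ))) (c : List (ℕ × ℕ) → ℂ),
      (∀ L ∈ s, (L.map fun p : ℕ × ℕ => p.1 * p.2).sum = n) ∧
      ∀ (F : Type) [Field F] [Fintype F], ∀ f : Polynomial F, f.Monic →
        a (extType F f) = ∑ L ∈ s, c L * iotaL F L f :=
  statement13_general n a ha

end PaperFF
end
end
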